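/- For every β ∈ (0,1], there is a unique point ζ ∈ [0, β/2] at which the function δ ↦ g_k(β,δ) attains its maximum over [0, β/2]; moreover ζ lies in the open interval (0, β/2), the derivative of δ ↦ g_k(β,δ) vanishes at ζ and vanishes at no other point of (0, β/2), and g_k(β,ζ) = G_k(β). -/

import Mathlib

/-- The binary entropy function `H(t) = -t·log₂ t - (1-t)·log₂(1-t)`. -/
noncomputable def binEntropy (t : ℝ) : ℝ :=
  -(t * Real.logb 2 t) - (1 - t) * Real.logb 2 (1 - t)

/-- The exponent function `g_k(β,δ)`. -/
noncomputable def gExp (k : ℕ) (β δ : ℝ) : ℝ :=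
  (β - 2 * δ) * Real.logb 2 ((k : ℝ) - 1) - (1 - δ) * Real.logb 2 (k : ℝ) +
    2 * binEntropy δ + (1 - δ) * binEntropy ((β - 2 * δ) / (1 - δ))

/-- `G_k(β) = sup { g_k(β,δ) : 0 ≤ δ ≤ β/2 }`. -/
noncomputable def GExp (k : ℕ) (β : ℝ) : ℝ :=
  sSup (gExp k β '' Set.Icc 0 (β / 2))

/-!
Written with `negMulLog`, the derivative of `g_k(β,·)` on `(0, β/2)` is
`(log k + log (1-δ) + 2 log (β-2δ) - 2 log (k-1) - 2 log δ - log (1+δ-β)) / log 2`,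
a sum of strictly decreasing terms. It vanishes where
`k (1-δ) (β-2δ)² = (k-1)² δ² (1+δ-β)`; the difference of the two sides is `kβ² > 0` at `δ = 0`
and negative at `δ = β/2`, so the intermediate value theorem gives a root `ζ`. Hence `g_k(β,·)`
strictly increases on `[0,ζ]` and strictly decreases on `[ζ,β/2]`.
-/

open Real hiding binEntropy
open Set

section UniqueMaximizer

variable {f : ℝ → ℝ} {a b ζ x : ℝ}

theorem isMaxOn_Icc_iff_of_strictMonoOn_of_strictAntiOn (hζ : ζ ∈ Icc a b)
    (hmono : StrictMonoOn f (Icc a ζ)) (hanti : StrictAntiOn f (Icc ζ b)) (hx : x ∈ Icc a b) :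
    IsMaxOn f (Icc a b) x ↔ x = ζ := by
  have hlt : ∀ y ∈ Icc a b, y ≠ ζ → f y < f ζ := by
    intro y hy hne
    rcases hne.lt_or_gt with h | h
    · exact hmono ⟨hy.1, h.le⟩ ⟨hζ.1, le_rfl⟩ h
    · exact hanti ⟨le_rfl, hζ.2⟩ ⟨h.le, hy.2⟩ h
  constructor
  · intro hmax
    by_contra hne
    exact (hlt x hx hne).not_ge (hmax hζ)
  · rintro rfl
    refine isMaxOn_iff.2 fun y hy => ?_
    rcases eq_or_ne y x with rfl | hne
    · exact le_rfl
    · exact (hlt y hy hne).le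

theorem isMaxOn_Icc_iff_of_deriv_strictAntiOn (hf : ContinuousOn f (Icc a b))
    (hf' : StrictAntiOn (deriv f) (Ioo a b)) (hζ : ζ ∈ Ioo a b) (hf'ζ : deriv f ζ = 0)
    (hx : x ∈ Icc a b) : IsMaxOn f (Icc a b) x ↔ x = ζ := by
  refine isMaxOn_Icc_iff_of_strictMonoOn_of_strictAntiOn (Ioo_subset_Icc_self hζ) ?_ ?_ hx
  · refine strictMonoOn_of_deriv_pos (convex_Icc a ζ) (hf.mono (Icc_subset_Icc_right hζ.2.le)) ?_
    rw [interior_Icc]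
    rintro y ⟨hay, hyζ⟩
    simpa only [hf'ζ] using hf' ⟨hay, hyζ.trans hζ.2⟩ hζ hyζ
  · refine strictAntiOn_of_deriv_neg (convex_Icc ζ b) (hf.mono (Icc_subset_Icc_left hζ.1.le)) ?_
    rw [interior_Icc]
    rintro y ⟨hζy, hyb⟩
    simpa only [hf'ζ] using hf' hζ ⟨hζ.1.trans hζy, hyb⟩ hζy

end UniqueMaximizer

theorem binEntropy_eq_negMulLog (t : ℝ) :
    binEntropy t = (negMulLog t + negMulLog (1 - t)) / log 2 := by
  simp only [binEntropy, negMulLog, logb]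
  ring

theorem mul_negMulLog_div (a : ℝ) {c : ℝ} (hc : c ≠ 0) :
    c * negMulLog (a / c) = negMulLog a + a * log c := by
  rcases eq_or_ne a 0 with rfl | ha
  · simp
  · simp only [negMulLog, log_div ha hc]
    field_simp
    ring

theorem mul_binEntropy_div (a : ℝ) {c : ℝ} (hc : c ≠ 0) :
    c * binEntropy (a / c) = (negMulLog a + negMulLog (c - a) - negMulLog c) / log 2 := by
  have hsub : 1 - a / c = (c - a) / c := by field_simp
  rw [binEntropy_eq_negMulLog, hsub, mul_div_assoc', mul_add, mul_negMulLog_div a hc,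
    mul_negMulLog_div (c - a) hc]
  simp only [negMulLog]
  ring

/-- `g_k(β,·)` expanded into `negMulLog` terms; unlike `gExp`, it is continuous everywhere. -/
noncomputable def gExpNegMulLog (k : ℕ) (β x : ℝ) : ℝ :=
  ((β - 2 * x) * log ((k : ℝ) - 1) - (1 - x) * log k + 2 * negMulLog x + negMulLog (1 - x) +
    negMulLog (β - 2 * x) + negMulLog (1 + x - β)) / log 2

noncomputable def gExpDeriv (k : ℕ) (β x : ℝ) : ℝ :=
  (log k + log (1 - x) + 2 * log (β - 2 * x) - 2 * log ((k : ℝ) - 1) - 2 * log x -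
    log (1 + x - β)) / log 2

section

variable (k : ℕ) {β x : ℝ}

theorem gExp_eq_gExpNegMulLog (hx : x ≠ 1) : gExp k β x = gExpNegMulLog k β x := by
  have hsub : (1 : ℝ) - x - (β - 2 * x) = 1 + x - β := by ring
  rw [gExp, binEntropy_eq_negMulLog, mul_binEntropy_div _ (sub_ne_zero.mpr hx.symm), hsub,
    gExpNegMulLog]
  simp only [logb]
  ring

theorem continuous_gExpNegMulLog (β : ℝ) : Continuous (gExpNegMulLog k β) := by
  unfold gExpNegMulLog
  fun_prop

theorem continuousOn_gExp (hβ : β < 2) : ContinuousOn (gExp k β) (Icc 0 (β / 2)) :=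
  (continuous_gExpNegMulLog k β).continuousOn.congr fun _ hx =>
    gExp_eq_gExpNegMulLog k (by linarith [hx.2])

theorem hasDerivAt_gExpNegMulLog (hx0 : x ≠ 0) (hx1 : 1 - x ≠ 0) (hx2 : β - 2 * x ≠ 0)
    (hx3 : 1 + x - β ≠ 0) : HasDerivAt (gExpNegMulLog k β) (gExpDeriv k β x) x := by
  have h1 : HasDerivAt (fun x : ℝ => 1 - x) (-1) x := by
    simpa using (hasDerivAt_id x).const_sub 1
  have h2 : HasDerivAt (fun x : ℝ => β - 2 * x) (-2) x := by
    simpa using ((hasDerivAt_id x).const_mul 2).const_sub β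
  have h3 : HasDerivAt (fun x : ℝ => 1 + x - β) 1 x := by
    simpa using ((hasDerivAt_id x).const_add 1).sub_const β
  have h := (((((h2.mul_const (log ((k : ℝ) - 1))).sub (h1.mul_const (log k))).add
    ((hasDerivAt_negMulLog hx0).const_mul 2)).add ((hasDerivAt_negMulLog hx1).comp x h1)).add
    ((hasDerivAt_negMulLog hx2).comp x h2)).add ((hasDerivAt_negMulLog hx3).comp x h3)
  refine (h.div_const (log 2)).congr_deriv ?_
  rw [gExpDeriv]
  ring

theorem deriv_gExp (hβ : β ≤ 1) (hx : x ∈ Ioo 0 (β / 2)) :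
    deriv (gExp k β) x = gExpDeriv k β x := by
  obtain ⟨hx0, hxβ⟩ := hx
  have heq : gExp k β =ᶠ[nhds x] gExpNegMulLog k β := by
    filter_upwards [Iio_mem_nhds (by linarith : x < 1)] with y hy
    exact gExp_eq_gExpNegMulLog k hy.ne
  rw [heq.deriv_eq]
  exact (hasDerivAt_gExpNegMulLog k hx0.ne' (by linarith) (by linarith) (by linarith)).deriv

theorem strictAntiOn_gExpDeriv (hβ : β ≤ 1) : StrictAntiOn (gExpDeriv k β) (Ioo 0 (β / 2)) := by
  rintro x ⟨hx0, hxβ⟩ y ⟨hy0, hyβ⟩ hxy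
  have h1 : log (1 - y) < log (1 - x) := log_lt_log (by linarith) (by linarith)
  have h2 : log (β - 2 * y) < log (β - 2 * x) := log_lt_log (by linarith) (by linarith)
  have h3 : log x < log y := log_lt_log hx0 hxy
  have h4 : log (1 + x - β) < log (1 + y - β) := log_lt_log (by linarith) (by linarith)
  rw [gExpDeriv, gExpDeriv]
  exact div_lt_div_of_pos_right (by linarith) (log_pos one_lt_two)

theorem gExpDeriv_eq_zero (hk : 2 ≤ k) (hx0 : 0 < x) (hx1 : 0 < 1 - x) (hx2 : 0 < β - 2 * x)
    (hx3 : 0 < 1 + x - β)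
    (hx : k * ((1 - x) * (β - 2 * x) ^ 2) = ((k : ℝ) - 1) ^ 2 * (x ^ 2 * (1 + x - β))) :
    gExpDeriv k β x = 0 := by
  have hk1 : (0 : ℝ) < k - 1 := by
    have : (2 : ℝ) ≤ k := by exact_mod_cast hk
    linarith
  have hlog := congrArg log hx
  rw [log_mul (by positivity) (by positivity), log_mul hx1.ne' (by positivity),
    log_mul (by positivity) (by positivity), log_mul (by positivity) hx3.ne',
    log_pow, log_pow, log_pow] at hlog
  rw [gExpDeriv, div_eq_zero_iff]
  left
  push_cast at hlog
  linarith

theorem exists_gExpDeriv_eq_zero (hk : 2 ≤ k) (hβ0 : 0 < β) (hβ1 : β ≤ 1) :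
    ∃ ζ ∈ Ioo 0 (β / 2), gExpDeriv k β ζ = 0 := by
  have hk2 : (2 : ℝ) ≤ k := by exact_mod_cast hk
  set φ : ℝ → ℝ := fun x =>
    k * ((1 - x) * (β - 2 * x) ^ 2) - ((k : ℝ) - 1) ^ 2 * (x ^ 2 * (1 + x - β)) with hφ
  have hφ0 : 0 < φ 0 := by
    simp only [hφ]
    nlinarith
  have hφβ : φ (β / 2) < 0 := by
    have : 0 < ((k : ℝ) - 1) ^ 2 * ((β / 2) ^ 2 * (1 + β / 2 - β)) := by
      have : 0 < 1 + β / 2 - β := by linarith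
      have : (0 : ℝ) < k - 1 := by linarith
      positivity
    simp only [hφ]
    nlinarith
  obtain ⟨ζ, ⟨hζ0, hζβ⟩, hφζ⟩ :=
    intermediate_value_Ioo' (by linarith) (by fun_prop : ContinuousOn φ _) ⟨hφβ, hφ0⟩
  refine ⟨ζ, ⟨hζ0, hζβ⟩, gExpDeriv_eq_zero k hk hζ0 (by linarith) (by linarith) (by linarith) ?_⟩
  simpa only [hφ, sub_eq_zero] using hφζ

end

/-- For `β ∈ (0,1]`, the map `δ ↦ g_k(β,δ)` has a unique maximizer `ζ` over
`[0,β/2]`; `ζ` lies in `(0,β/2)`, it is the unique interior zero of the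
derivative, and `g_k(β,ζ) = G_k(β)`. -/
theorem gExp_unique_maximizer (k : ℕ) (hk : 2 ≤ k)
    (β : ℝ) (hβ0 : 0 < β) (hβ1 : β ≤ 1) :
    ∃ ζ : ℝ, ζ ∈ Set.Ioo 0 (β / 2) ∧
      IsMaxOn (gExp k β) (Set.Icc 0 (β / 2)) ζ ∧
      (∀ ζ' ∈ Set.Icc (0 : ℝ) (β / 2),
        IsMaxOn (gExp k β) (Set.Icc 0 (β / 2)) ζ' → ζ' = ζ) ∧
      deriv (gExp k β) ζ = 0 ∧
      (∀ δ ∈ Set.Ioo (0 : ℝ) (β / 2), deriv (gExp k β) δ = 0 → δ = ζ) ∧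
      gExp k β ζ = GExp k β := by
  obtain ⟨ζ, hζ, hDζ⟩ := exists_gExpDeriv_eq_zero k hk hβ0 hβ1
  have hderiv : EqOn (gExpDeriv k β) (deriv (gExp k β)) (Ioo 0 (β / 2)) :=
    fun x hx => (deriv_gExp k hβ1 hx).symm
  have hanti := (strictAntiOn_gExpDeriv k hβ1).congr hderiv
  have hcrit : deriv (gExp k β) ζ = 0 := (hderiv hζ).symm.trans hDζ
  have hmax : ∀ x ∈ Icc 0 (β / 2), IsMaxOn (gExp k β) (Icc 0 (β / 2)) x ↔ x = ζ :=
    fun x hx => isMaxOn_Icc_iff_of_deriv_strictAntiOn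
      (continuousOn_gExp k (by linarith)) hanti hζ hcrit hx
  have hmaxζ := (hmax ζ (Ioo_subset_Icc_self hζ)).2 rfl
  refine ⟨ζ, hζ, hmaxζ, fun x hx h => (hmax x hx).1 h, hcrit,
    fun δ hδ h => hanti.injOn hδ hζ (h.trans hcrit.symm), ?_⟩
  exact (IsGreatest.csSup_eq ⟨mem_image_of_mem _ (Ioo_subset_Icc_self hζ),
    forall_mem_image.2 (isMaxOn_iff.1 hmaxζ)⟩).symm
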